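/- arXiv:2306.04005 — 2 statements merged into one kernel-verified Lean document; each statement's English description precedes it below -/
import Mathlib

section
/- For a tree T on n vertices with distance matrix D and degree vector d, we have d^T D d = 4·1^T D 1 − 2(n−1)(2n−1). -/
/-!
Fix a root `k`. In a tree, `d(·, k)` changes by exactly one along every edge, and every vertex
`v ≠ k` has exactly one neighbour closer to `k`. Counting every edge at both of its endpoints
therefore gives `∑ v, deg v * d(v, k) = ∑ v ≠ k, (2 d(v, k) - 1) = 2 ∑ v, d(v, k) - (n - 1)`,
that is `D d = 2 D 1 - (n - 1) 1`. Substituting this twice into `dᵀ D d` and using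
`1ᵀ d = 2 (n - 1)` gives the identity.
-/

open Finset

namespace SimpleGraph

variable {V : Type*} {G : SimpleGraph V}

theorem Walk.dist_le_length_of_mem_support {u v w : V} (p : G.Walk u v) (hw : w ∈ p.support) :
    G.dist u w ≤ p.length := by
  classical
  exact (dist_le _).trans (p.length_takeUntil_le_length hw)

variable [Fintype V] [DecidableRel G.Adj]

theorem sum_degree_mul_eq_sum_card_pred_neighbors (f : V → ℕ)
    (hf : ∀ u v, G.Adj u v → f u = f v + 1 ∨ f v = f u + 1) :
    ∑ v, (G.degree v : ℤ) * f v =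
      ∑ v, (#{u | G.Adj v u ∧ f u + 1 = f v} : ℤ) * (2 * f v - 1) := by
  have hdeg : ∀ v, (G.degree v : ℤ) * f v =
      ∑ u, ((if G.Adj v u ∧ f u + 1 = f v then (f v : ℤ) else 0) +
        (if G.Adj u v ∧ f v + 1 = f u then (f v : ℤ) else 0)) := by
    intro v
    rw [← card_neighborFinset_eq_degree, neighborFinset_eq_filter, card_filter]
    push_cast
    rw [sum_mul]
    refine sum_congr rfl fun u _ => ?_
    by_cases hadj : G.Adj v u
    · rcases hf v u hadj with huv | huv <;> simp [hadj, hadj.symm, huv] <;> omega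
    · simp [hadj, G.adj_comm u v]
  -- Re-index each edge counted at its lower endpoint by its upper endpoint `v`, where it
  -- contributes `f v - 1`.
  have hswap : ∑ v, ∑ u, (if G.Adj u v ∧ f v + 1 = f u then (f v : ℤ) else 0) =
      ∑ v, ∑ u, (if G.Adj v u ∧ f u + 1 = f v then (f v : ℤ) - 1 else 0) := by
    rw [sum_comm]
    refine sum_congr rfl fun v _ => sum_congr rfl fun u _ => ?_
    split_ifs <;> first | rfl | omega
  simp only [hdeg, sum_add_distrib, hswap, card_filter]
  push_cast
  simp only [← sum_add_distrib, sum_mul]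
  refine sum_congr rfl fun v _ => sum_congr rfl fun u _ => ?_
  split_ifs <;> ring

theorem IsTree.card_adj_dist_add_one [DecidableEq V] (hG : G.IsTree) (k v : V) :
    #{u | G.Adj v u ∧ G.dist k u + 1 = G.dist k v} = if v = k then 0 else 1 := by
  split_ifs with hvk
  · subst hvk
    simp
  obtain ⟨p, hp, hpl⟩ := hG.connected.exists_path_of_dist k v
  have hnil : ¬p.Nil := Walk.not_nil_of_ne (Ne.symm hvk)
  rw [card_eq_one]
  refine ⟨p.penultimate, ext fun u => ?_⟩
  simp only [mem_filter, mem_univ, true_and, mem_singleton]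
  constructor
  · rintro ⟨hadj, hdist⟩
    obtain ⟨q, hq, hql⟩ := hG.connected.exists_path_of_dist k u
    have hv : v ∉ q.support := fun hv => by
      have := q.dist_le_length_of_mem_support hv
      omega
    exact hG.isAcyclic.eq_penultimate_of_adj_end hp hadj
      (hG.isAcyclic.mem_support_of_ne_mem_support_of_adj_of_isPath hp hq hadj hv)
  · rintro rfl
    have hle : G.dist k p.penultimate ≤ p.length - 1 := p.length_dropLast ▸ dist_le _
    have hpos : 0 < p.length := Walk.not_nil_iff_lt_length.mp hnil
    refine ⟨(p.adj_penultimate hnil).symm, ?_⟩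
    have := hG.dist_eq_dist_add_one_of_adj k (p.adj_penultimate hnil)
    omega

theorem IsTree.sum_degree_mul_dist (hG : G.IsTree) (k : V) :
    ∑ v, (G.degree v : ℤ) * G.dist k v = 2 * ∑ v, (G.dist k v : ℤ) - (Fintype.card V - 1) := by
  classical
  rw [sum_degree_mul_eq_sum_card_pred_neighbors _ fun _ _ huv ↦
    hG.dist_eq_dist_add_one_of_adj k huv]
  simp only [hG.card_adj_dist_add_one, Nat.cast_ite, ite_mul, sum_ite, filter_ne',
    sum_sub_distrib, ← mul_sum, sum_erase_eq_sub (mem_univ k)]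
  simp [card_univ]
  ring

theorem IsTree.sum_degree (hG : G.IsTree) : ∑ v, (G.degree v : ℤ) = 2 * (Fintype.card V - 1) := by
  have := hG.card_edgeFinset
  rw [← Nat.cast_sum, sum_degrees_eq_twice_card_edges]
  push_cast
  omega

end SimpleGraph

theorem tree_degree_distance_quadratic (n : ℕ) {V : Type*} [Fintype V]
    (G : SimpleGraph V) [DecidableRel G.Adj] (hT : G.IsTree)
    (hn : Fintype.card V = n) :
    (∑ j : V, ∑ k : V, (G.degree j : ℤ) * (G.degree k : ℤ) * (G.dist j k : ℤ))
      = 4 * (∑ j : V, ∑ k : V, (G.dist j k : ℤ))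
        - 2 * ((n : ℤ) - 1) * (2 * (n : ℤ) - 1) := by
  have hrow (j : V) :
      ∑ k, (G.degree k : ℤ) * G.dist j k = 2 * ∑ k, (G.dist j k : ℤ) - (n - 1) := by
    rw [hT.sum_degree_mul_dist, hn]
  have hcol (k : V) :
      ∑ j, (G.degree j : ℤ) * G.dist j k = 2 * ∑ j, (G.dist j k : ℤ) - (n - 1) := by
    simpa only [SimpleGraph.dist_comm] using hrow k
  have hmixed : ∑ k, (G.degree k : ℤ) * ∑ j, (G.dist j k : ℤ) =
      2 * ∑ j, ∑ k, (G.dist j k : ℤ) - n * (n - 1) := by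
    simp only [mul_sum]
    rw [sum_comm]
    simp only [hrow, sum_sub_distrib, ← mul_sum, sum_const, card_univ, hn, nsmul_eq_mul]
    ring
  calc ∑ j, ∑ k, (G.degree j : ℤ) * G.degree k * G.dist j k
      = ∑ k, (G.degree k : ℤ) * ∑ j, (G.degree j : ℤ) * G.dist j k := by
        rw [sum_comm]
        exact sum_congr rfl fun k _ => by rw [mul_sum]; exact sum_congr rfl fun j _ => by ring
    _ = ∑ k, (G.degree k : ℤ) * (2 * ∑ j, (G.dist j k : ℤ) - (n - 1)) := by simp only [hcol]
    _ = 2 * ∑ k, (G.degree k : ℤ) * ∑ j, (G.dist j k : ℤ)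
          - (n - 1) * ∑ k, (G.degree k : ℤ) := by
        rw [mul_sum, mul_sum, ← sum_sub_distrib]
        exact sum_congr rfl fun k _ => by ring
    _ = 4 * ∑ j, ∑ k, (G.dist j k : ℤ) - 2 * (n - 1) * (2 * n - 1) := by
        rw [hmixed, hT.sum_degree, hn]
        ring
end

section
/- Let T be a tree on n vertices and fix vertices r and a. The sum 2 Σ_{b ∈ V(T)} d(r, P_{a,b}) equals n(n−1) if and only if T is a path on n vertices with r and a as its two end vertices. -/
/-!
Put `f b = d(r, b)`; since `d(r, P_{a,b}) ≤ f b`, it is enough to understand `∑ f`. Every value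
below `f b` is attained on a shortest `r`–`b` path, so `f b ≤ #{v | f v < f b}`, and summing over
`b` counts the pairs `(v, b)` with `f v < f b`: at most half of the `n(n-1)` ordered pairs of
distinct vertices, with equality only if `f` is injective. Hence equality makes `f` a bijection
onto `{0, …, n-1}`; then neighbours have levels differing by exactly one and each vertex at level
`k+1` has a neighbour at level `k`, so `T` is the path through the levels, and `a` is its far end
because the vertex at level `n-1` has `n - 1 = d(r, P_{a,b}) ≤ d(r, a)`. Conversely, on such a
path `d(r, P_{a,b})` is the position of `b`.
-/

/-- The distance from vertex `r` to the (unique, in a tree) path between `a` and `b`. -/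
noncomputable def distToPath {V : Type*} (G : SimpleGraph V) (r a b : V) : ℕ :=
  sInf (G.dist r '' {s | G.dist a s + G.dist s b = G.dist a b})

/-- `G` is a path graph on all of `V` whose two end vertices are `r` and `a`. -/
def IsPathWithEnds {V : Type*} [Fintype V] (G : SimpleGraph V) (r a : V) : Prop :=
  ∃ e : Fin (Fintype.card V) ≃ V,
    ((e.symm r : ℕ) = 0) ∧ ((e.symm a : ℕ) = Fintype.card V - 1) ∧
    ∀ i j : Fin (Fintype.card V), G.Adj (e i) (e j) ↔ ((i : ℕ) + 1 = j ∨ (j : ℕ) + 1 = i)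

open Finset SimpleGraph

section Counting

variable {V : Type*} [Fintype V] (f : V → ℕ)

lemma le_card_filter_lt (hf : ∀ b, ∀ k < f b, ∃ v, f v = k) (b : V) :
    f b ≤ #{v | f v < f b} := by
  have hsub : range (f b) ⊆ image f {v | f v < f b} := fun k hk => by
    obtain ⟨v, rfl⟩ := hf b k (mem_range.mp hk)
    exact mem_image_of_mem f (by simpa using hk)
  simpa using (card_le_card hsub).trans card_image_le

lemma two_mul_sum_card_filter_lt_add_sum_card_fiber :
    2 * ∑ b, #{v | f v < f b} + ∑ b, #{v | f v = f b} = Fintype.card V * Fintype.card V := by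
  have hswap : ∑ b, #{v | f v < f b} = ∑ b, #{v | f b < f v} := by
    simp only [card_filter]
    exact sum_comm
  have htrichotomy (b : V) :
      #{v | f v < f b} + #{v | f b < f v} + #{v | f v = f b} = Fintype.card V := by
    rw [card_filter, card_filter, card_filter, ← sum_add_distrib, ← sum_add_distrib,
      ← card_univ, card_eq_sum_ones]
    exact sum_congr rfl fun v _ => by split_ifs <;> omega
  rw [two_mul]
  nth_rewrite 2 [hswap]
  rw [← sum_add_distrib, ← sum_add_distrib, sum_congr rfl fun b _ => htrichotomy b]
  simp

lemma one_le_card_fiber (b : V) : 1 ≤ #{v | f v = f b} :=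
  card_pos.mpr ⟨b, by simp⟩

lemma two_mul_sum_card_filter_lt_le :
    2 * ∑ b, #{v | f v < f b} ≤ Fintype.card V * (Fintype.card V - 1) := by
  have hfibers : Fintype.card V ≤ ∑ b, #{v | f v = f b} := by
    simpa using sum_le_sum fun b (_ : b ∈ univ) => one_le_card_fiber f b
  have := two_mul_sum_card_filter_lt_add_sum_card_fiber f
  rw [Nat.mul_sub_one]
  omega

lemma injective_of_two_mul_sum_card_filter_lt_eq
    (h : 2 * ∑ b, #{v | f v < f b} = Fintype.card V * (Fintype.card V - 1)) :
    Function.Injective f := by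
  have hsum : ∑ b, #{v | f v = f b} = ∑ _b : V, 1 := by
    have := two_mul_sum_card_filter_lt_add_sum_card_fiber f
    rw [Nat.mul_sub_one] at h
    simp only [sum_const, card_univ, smul_eq_mul, mul_one]
    have : Fintype.card V ≤ Fintype.card V * Fintype.card V := Nat.le_mul_self _
    omega
  have hfiber := (sum_eq_sum_iff_of_le fun b _ => one_le_card_fiber f b).mp hsum.symm
  intro u v huv
  exact card_le_one.mp (hfiber v (mem_univ v)).ge u (by simp [huv]) v (by simp)

end Counting

namespace SimpleGraph

variable {V : Type*} {G : SimpleGraph V} {u v : V}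

lemma Walk.dist_getVert_of_length_eq_dist {p : G.Walk u v} (hp : p.length = G.dist u v)
    {k : ℕ} (hk : k ≤ p.length) : G.dist u (p.getVert k) = k := by
  rw [← length_eq_dist_of_subwalk hp (p.isSubwalk_take k), Walk.take_length, min_eq_left hk]

lemma exists_dist_eq_of_lt {k : ℕ} (h : k < G.dist u v) : ∃ w, G.dist u w = k := by
  obtain ⟨p, hp⟩ := exists_walk_of_dist_ne_zero (G := G) (u := u) (v := v) (by omega)
  exact ⟨p.getVert k, p.dist_getVert_of_length_eq_dist hp (by omega)⟩

lemma exists_adj_dist_eq_of_dist_eq_succ {k : ℕ} (h : G.dist u v = k + 1) :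
    ∃ w, G.Adj w v ∧ G.dist u w = k := by
  obtain ⟨p, hp⟩ := exists_walk_of_dist_ne_zero (G := G) (u := u) (v := v) (by omega)
  refine ⟨p.getVert k, ?_, p.dist_getVert_of_length_eq_dist hp (by omega)⟩
  have hlast : p.getVert (k + 1) = v := by rw [← h, ← hp, Walk.getVert_length]
  have hadj : G.Adj (p.getVert k) (p.getVert (k + 1)) := p.adj_getVert_succ (by omega)
  rwa [hlast] at hadj

lemma dist_lt_card [Fintype V] (u v : V) : G.dist u v < Fintype.card V := by
  by_cases huv : G.Reachable u v
  · obtain ⟨p, hpath, hp⟩ := huv.exists_path_of_dist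
    exact hp ▸ hpath.length_lt
  · rw [dist_eq_zero_of_not_reachable huv]
    exact Fintype.card_pos_iff.mpr ⟨u⟩

lemma adj_iff_of_injective_dist {r : V} (hinj : Function.Injective (G.dist r)) :
    G.Adj u v ↔ G.dist r u + 1 = G.dist r v ∨ G.dist r v + 1 = G.dist r u := by
  constructor
  · intro h
    have hne : G.dist r u ≠ G.dist r v := hinj.ne h.ne
    rcases h.diff_dist_adj (u := r) with h' | h' | h' <;> omega
  · have hsucc {x y : V} (hxy : G.dist r x + 1 = G.dist r y) : G.Adj x y := by
      obtain ⟨w, hw, hdist⟩ := exists_adj_dist_eq_of_dist_eq_succ hxy.symm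
      exact hinj hdist ▸ hw
    rintro (h | h)
    · exact hsucc h
    · exact (hsucc h).symm

lemma Walk.apply_le_add_length (f : V → ℕ) (hf : ∀ x y, G.Adj x y → f x ≤ f y + 1) :
    ∀ {u v : V} (p : G.Walk u v), f u ≤ f v + p.length
  | _, _, .nil => by simp
  | _, _, .cons h p => by
    have := hf _ _ h
    have := p.apply_le_add_length f hf
    rw [Walk.length_cons]
    omega

section PathEnumeration

variable {n : ℕ} (e : Fin n ≃ V)
  (hadj : ∀ i j : Fin n, G.Adj (e i) (e j) ↔ (i : ℕ) + 1 = j ∨ (j : ℕ) + 1 = i)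
include hadj

lemma exists_walk_length_eq_of_adj_iff (d : ℕ) :
    ∀ x y : V, (e.symm x : ℕ) + d = e.symm y → ∃ w : G.Walk x y, w.length = d := by
  induction d with
  | zero =>
    intro x y hxy
    obtain rfl : x = y := e.symm.injective (Fin.ext (by omega))
    exact ⟨.nil, rfl⟩
  | succ d ih =>
    intro x y hxy
    let y' : V := e ⟨e.symm y - 1, by omega⟩
    obtain ⟨w, hw⟩ := ih x y' (by simp only [Equiv.symm_apply_apply, y']; omega)
    have hy' : G.Adj y' y := by
      simpa [y'] using (hadj ⟨e.symm y - 1, by omega⟩ (e.symm y)).mpr (Or.inl (by dsimp only; omega))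
    exact ⟨w.concat hy', by rw [Walk.length_concat, hw]⟩

lemma dist_eq_of_adj_iff (u v : V) :
    G.dist u v = ((e.symm u : ℕ) - e.symm v) + ((e.symm v : ℕ) - e.symm u) := by
  have hlip (x y : V) (hxy : G.Adj x y) : (e.symm x : ℕ) ≤ e.symm y + 1 := by
    have := (hadj (e.symm x) (e.symm y)).mp (by simpa using hxy)
    omega
  suffices h : ∀ x y : V, (e.symm x : ℕ) ≤ e.symm y → G.dist x y = e.symm y - e.symm x by
    rcases le_total (e.symm u : ℕ) (e.symm v) with huv | hvu
    · rw [h u v huv]; omega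
    · rw [dist_comm, h v u hvu]; omega
  intro x y hxy
  obtain ⟨w, hw⟩ := exists_walk_length_eq_of_adj_iff e hadj _ x y (Nat.add_sub_of_le hxy)
  obtain ⟨p, hp⟩ := w.reachable.symm.exists_walk_length_eq_dist
  have := p.apply_le_add_length (fun v => (e.symm v : ℕ)) hlip
  rw [hp, dist_comm] at this
  exact le_antisymm (hw ▸ dist_le w) (by omega)

end PathEnumeration

end SimpleGraph

section DistToPath

variable {V : Type*} {G : SimpleGraph V} {r a b : V}

lemma distToPath_le {s : V} (hs : G.dist a s + G.dist s b = G.dist a b) :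
    distToPath G r a b ≤ G.dist r s :=
  Nat.sInf_le ⟨s, hs, rfl⟩

lemma distToPath_le_dist_left : distToPath G r a b ≤ G.dist r a :=
  distToPath_le (by simp)

lemma distToPath_le_dist_right : distToPath G r a b ≤ G.dist r b :=
  distToPath_le (by simp)

lemma le_distToPath {k : ℕ} (h : ∀ s, G.dist a s + G.dist s b = G.dist a b → k ≤ G.dist r s) :
    k ≤ distToPath G r a b :=
  le_csInf ⟨_, b, by simp, rfl⟩ (by rintro _ ⟨s, hs, rfl⟩; exact h s hs)

lemma distToPath_eq_of_adj_iff {n : ℕ} (e : Fin n ≃ V)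
    (hadj : ∀ i j : Fin n, G.Adj (e i) (e j) ↔ (i : ℕ) + 1 = j ∨ (j : ℕ) + 1 = i)
    (hr : (e.symm r : ℕ) = 0) (ha : (e.symm a : ℕ) = n - 1) (b : V) :
    distToPath G r a b = e.symm b := by
  have hb := (e.symm b).isLt
  refine le_antisymm (distToPath_le_dist_right.trans ?_) (le_distToPath fun s hs => ?_)
  · rw [dist_eq_of_adj_iff e hadj]
    omega
  · simp only [dist_eq_of_adj_iff e hadj] at hs ⊢
    omega

lemma two_mul_sum_distToPath_of_adj_iff [Fintype V] {n : ℕ} (e : Fin n ≃ V)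
    (hadj : ∀ i j : Fin n, G.Adj (e i) (e j) ↔ (i : ℕ) + 1 = j ∨ (j : ℕ) + 1 = i)
    (hr : (e.symm r : ℕ) = 0) (ha : (e.symm a : ℕ) = n - 1) :
    2 * ∑ b, distToPath G r a b = n * (n - 1) := by
  rw [sum_congr rfl fun b _ => distToPath_eq_of_adj_iff e hadj hr ha b,
    Equiv.sum_comp e.symm (fun i : Fin n => (i : ℕ)), Fin.sum_univ_eq_sum_range (fun i => i) n,
    mul_comm, sum_range_id_mul_two]

lemma injective_dist_of_two_mul_sum_distToPath_eq [Fintype V]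
    (h : 2 * ∑ b, distToPath G r a b = Fintype.card V * (Fintype.card V - 1)) :
    Function.Injective (G.dist r) ∧ ∀ b, distToPath G r a b = G.dist r b := by
  have hle : ∑ b, distToPath G r a b ≤ ∑ b, G.dist r b :=
    sum_le_sum fun b _ => distToPath_le_dist_right
  have hcount : ∑ b, G.dist r b ≤ ∑ b, #{v | G.dist r v < G.dist r b} :=
    sum_le_sum fun b _ => le_card_filter_lt _ (fun _ _ hk => exists_dist_eq_of_lt hk) b
  have hbound := two_mul_sum_card_filter_lt_le (G.dist r)
  have hsum : ∑ b, distToPath G r a b = ∑ b, G.dist r b := by omega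
  exact ⟨injective_of_two_mul_sum_card_filter_lt_eq _ (by omega), fun b =>
    (sum_eq_sum_iff_of_le fun b _ => distToPath_le_dist_right).mp hsum b (mem_univ b)⟩

lemma isPathWithEnds_of_two_mul_sum_distToPath_eq [Fintype V]
    (h : 2 * ∑ b, distToPath G r a b = Fintype.card V * (Fintype.card V - 1)) :
    IsPathWithEnds G r a := by
  obtain ⟨hinj, hpath⟩ := injective_dist_of_two_mul_sum_distToPath_eq h
  have hcard : 0 < Fintype.card V := Fintype.card_pos_iff.mpr ⟨r⟩
  let level : V → Fin (Fintype.card V) := fun b => ⟨G.dist r b, dist_lt_card r b⟩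
  have hbij : Function.Bijective level := (Fintype.bijective_iff_injective_and_card level).mpr
    ⟨fun u v huv => hinj (congrArg Fin.val huv), by simp⟩
  let e := (Equiv.ofBijective level hbij).symm
  have hlevel (b : V) : (e.symm b : ℕ) = G.dist r b := rfl
  have hdist (i : Fin (Fintype.card V)) : G.dist r (e i) = i := by
    rw [← hlevel, e.symm_apply_apply]
  refine ⟨e, by rw [hlevel, dist_self], ?_, fun i j => by
    rw [adj_iff_of_injective_dist hinj, hdist, hdist]⟩
  let far := e ⟨Fintype.card V - 1, by omega⟩
  have hfar : Fintype.card V - 1 ≤ G.dist r a := calc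
    Fintype.card V - 1 = G.dist r far := (hdist ⟨_, _⟩).symm
    _ = distToPath G r a far := (hpath far).symm
    _ ≤ G.dist r a := distToPath_le_dist_left
  have := dist_lt_card (G := G) r a
  rw [hlevel]
  omega

end DistToPath

theorem sum_dist_to_paths_eq_max_iff_general (n : ℕ) {V : Type*} [Fintype V]
    (G : SimpleGraph V) (hn : Fintype.card V = n)
    (r a : V) :
    2 * ∑ b : V, distToPath G r a b = n * (n - 1) ↔ IsPathWithEnds G r a := by
  subst hn
  exact ⟨isPathWithEnds_of_two_mul_sum_distToPath_eq,
    fun ⟨e, hr, ha, hadj⟩ => two_mul_sum_distToPath_of_adj_iff e hadj hr ha⟩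

theorem sum_dist_to_paths_eq_max_iff (n : ℕ) {V : Type*} [Fintype V]
    (G : SimpleGraph V) (hT : G.IsTree) (hn : Fintype.card V = n)
    (r a : V) :
    2 * ∑ b : V, distToPath G r a b = n * (n - 1) ↔ IsPathWithEnds G r a :=
  sum_dist_to_paths_eq_max_iff_general n G hn r a
end
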